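/- (Pointwise kernel identity underlying Theorem 3.1) Let N ≥ 1, let θ_1, …, θ_N ∈ ℝ, and set a_n = (cos θ_n, sin θ_n) ∈ ℝ². Let k ∈ ℂ and let r, r' ∈ ℝ² with r ≠ r', write ρ = |r − r'| and r − r' = ρ (cos φ, sin φ) for some φ ∈ ℝ. Then (1/N) Σ_{p=1}^{N} Σ_{q=1, q ≠ p}^{N} e^{i k (a_p + a_q) · (r − r')} = N ( J_0(k ρ) + (1/N) Σ_{n=1}^{N} E(θ_n, φ, k ρ) )² − ( J_0(2 k ρ) + (1/N) Σ_{n=1}^{N} E(θ_n, φ, 2 k ρ) ). -/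

import Mathlib

open scoped RealInnerProductSpace

/-- Bessel function of the first kind of integer order `s`, defined by Bessel's integral. -/
noncomputable def besselJ (s : ℤ) (z : ℂ) : ℂ :=
  (1 / (2 * (Real.pi : ℂ))) *
    ∫ τ in (-Real.pi)..Real.pi,
      Complex.exp (Complex.I * (z * (Real.sin τ : ℂ) - (s : ℂ) * (τ : ℂ)))

/-- The error series `E(θ, φ, z) = Σ_{s ∈ ℤ, s ≠ 0} i^s J_s(z) e^{i s (θ − φ)}`. -/
noncomputable def errE (θ φ : ℝ) (z : ℂ) : ℂ :=
  ∑' s : {s : ℤ // s ≠ 0},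
    Complex.I ^ (s : ℤ) * besselJ s z *
      Complex.exp (Complex.I * ((s : ℤ) : ℂ) * ((θ : ℂ) - (φ : ℂ)))

/-!
By Bessel's integral, `J_s(z)` is the `s`-th Fourier coefficient of the smooth `2π`-periodic
function `τ ↦ e^{i z sin τ}`; two integrations by parts give `J_s(z) = O(1/s²)`, so its Fourier
series converges to it pointwise (Jacobi–Anger). Evaluated at `θ - φ + π/2`, where
`e^{i s π/2} = i^s`, this reads `J_0(z) + E(θ, φ, z) = e^{i z cos(θ - φ)}`. With
`c_n = e^{i k ρ cos(θ_n - φ)} = e^{i k a_n · (r - r')}`, the left-hand side is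
`(1/N) ((Σ c_n)² - Σ c_n²)` and `c_n² = e^{i (2k) ρ cos(θ_n - φ)}`.
-/

open Complex Function
open scoped Real

section FourierSeries

variable {a b : ℝ}

theorem fourierCoeffOn_deriv_of_eq (hab : a < b) {f f' : ℝ → ℂ}
    (hd : ∀ x ∈ Set.uIcc a b, HasDerivAt f (f' x) x)
    (hf' : IntervalIntegrable f' MeasureTheory.volume a b)
    (hfab : f a = f b) {n : ℤ} (hn : n ≠ 0) :
    fourierCoeffOn hab f' n = 2 * π * I * n / (b - a) * fourierCoeffOn hab f n := by
  rw [fourierCoeffOn_of_hasDerivAt hab hn hd hf', hfab, sub_self, mul_zero, zero_sub]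
  have : ((b - a : ℝ) : ℂ) ≠ 0 := ofReal_ne_zero.mpr (sub_pos.mpr hab).ne'
  have hπ : (π : ℂ) ≠ 0 := ofReal_ne_zero.mpr Real.pi_ne_zero
  push_cast at this ⊢
  field_simp

theorem norm_fourierCoeffOn_le {E : Type*} [NormedAddCommGroup E] [NormedSpace ℂ E]
    (hab : a < b) {f : ℝ → E} {C : ℝ} (hC : ∀ x ∈ Set.uIoc a b, ‖f x‖ ≤ C) (n : ℤ) :
    ‖fourierCoeffOn hab f n‖ ≤ C := by
  have hba := sub_pos.mpr hab
  have := Fact.mk hba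
  rw [fourierCoeffOn_eq_integral, norm_smul]
  have hb : ∀ x ∈ Set.uIoc a b, ‖fourier (-n) (x : AddCircle (b - a)) • f x‖ ≤ C := fun x hx => by
    rw [norm_smul, fourier_apply, Circle.norm_coe, one_mul]; exact hC x hx
  calc ‖1 / (b - a)‖ * ‖∫ x in a..b, fourier (-n) (x : AddCircle (b - a)) • f x‖
      ≤ 1 / (b - a) * (C * |b - a|) := by
        rw [Real.norm_of_nonneg (by positivity)]
        gcongr
        exact intervalIntegral.norm_integral_le_of_norm_le_const hb
    _ = C := by rw [abs_of_pos hba]; field_simp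

theorem Function.Periodic.deriv {𝕜 F : Type*} [NontriviallyNormedField 𝕜] [NormedAddCommGroup F]
    [NormedSpace 𝕜 F] {f : 𝕜 → F} {T : 𝕜} (hf : Periodic f T) : Periodic (deriv f) T :=
  fun x => by rw [← deriv_comp_add_const, hf.funext]

theorem fourierCoeffOn_deriv_deriv (hab : a < b) {f : ℝ → ℂ} (hf : ContDiff ℝ 2 f)
    (hper : Periodic f (b - a)) {n : ℤ} (hn : n ≠ 0) :
    fourierCoeffOn hab (deriv (deriv f)) n =
      -((2 * π * n / (b - a) : ℝ) : ℂ) ^ 2 * fourierCoeffOn hab f n := by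
  have hends : ∀ {g : ℝ → ℂ}, Periodic g (b - a) → g a = g b := fun hg => by
    simpa using (hg a).symm
  have hf'' : Continuous (deriv (deriv f)) := (hf.deriv' (n := 1)).continuous_deriv le_rfl
  rw [fourierCoeffOn_deriv_of_eq hab (fun x _ => (hf.differentiable_deriv_two x).hasDerivAt)
      (hf''.intervalIntegrable _ _) (hends hper.deriv) hn,
    fourierCoeffOn_deriv_of_eq hab (fun x _ => (hf.differentiable two_ne_zero x).hasDerivAt)
      ((hf.continuous_deriv one_le_two).intervalIntegrable _ _) (hends hper) hn]
  push_cast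
  ring_nf
  rw [I_sq]
  ring

theorem summable_fourierCoeffOn_of_contDiff (hab : a < b) {f : ℝ → ℂ} (hf : ContDiff ℝ 2 f)
    (hper : Periodic f (b - a)) : Summable (fourierCoeffOn hab f) := by
  obtain ⟨C, hC⟩ := isCompact_uIcc.exists_bound_of_continuousOn
    ((hf.deriv' (n := 1)).continuous_deriv le_rfl).continuousOn (s := Set.uIcc a b)
  set K := ((b - a) / (2 * π)) ^ 2 * C
  refine .of_norm_bounded_eventually ((Real.summable_one_div_int_pow.mpr one_lt_two).mul_left K) ?_
  filter_upwards [Filter.eventually_cofinite_ne 0] with n hn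
  have hcoeff := norm_fourierCoeffOn_le hab (fun x hx => hC x (Set.uIoc_subset_uIcc hx)) n
  rw [fourierCoeffOn_deriv_deriv hab hf hper hn, norm_mul, norm_neg, norm_pow, norm_real,
    Real.norm_eq_abs, sq_abs] at hcoeff
  have hn' : (n : ℝ) ≠ 0 := Int.cast_ne_zero.mpr hn
  have hba : b - a ≠ 0 := (sub_pos.mpr hab).ne'
  calc ‖fourierCoeffOn hab f n‖
      = ((b - a) / (2 * π)) ^ 2 / n ^ 2 *
          ((2 * π * n / (b - a)) ^ 2 * ‖fourierCoeffOn hab f n‖) := by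
        field_simp
    _ ≤ ((b - a) / (2 * π)) ^ 2 / n ^ 2 * C := by gcongr
    _ = K * (1 / (n : ℝ) ^ 2) := by ring

theorem hasSum_fourierCoeffOn_of_contDiff (hab : a < b) {f : ℝ → ℂ} (hf : ContDiff ℝ 2 f)
    (hper : Periodic f (b - a)) (x : ℝ) :
    HasSum (fun n => fourierCoeffOn hab f n * fourier n (x : AddCircle (b - a))) (f x) := by
  have := Fact.mk (sub_pos.mpr hab)
  let F : C(AddCircle (b - a), ℂ) := ⟨hper.lift, continuous_coinduced_dom.mpr hf.continuous⟩
  have hcoeff : fourierCoeff F = fourierCoeffOn hab f := funext fun n => by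
    rw [fourierCoeff_eq_intervalIntegral _ n a, fourierCoeffOn_eq_integral, add_sub_cancel]
    rfl
  have := has_pointwise_sum_fourier_series_of_summable
    (hcoeff ▸ summable_fourierCoeffOn_of_contDiff hab hf hper) (x : AddCircle (b - a))
  rwa [hcoeff, show F x = f x from hper.lift_coe x] at this

end FourierSeries

theorem besselJ_eq_fourierCoeffOn (s : ℤ) (z : ℂ) :
    besselJ s z =
      fourierCoeffOn (neg_lt_self Real.pi_pos) (fun τ : ℝ => cexp (I * z * Real.sin τ)) s := by
  rw [fourierCoeffOn_eq_integral, besselJ, sub_neg_eq_add, ← two_mul, real_smul]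
  push_cast
  congr 1
  refine intervalIntegral.integral_congr fun τ _ => ?_
  rw [fourier_coe_apply, smul_eq_mul, ← exp_add]
  congr 1
  push_cast
  field_simp
  ring

theorem hasSum_besselJ_mul_exp (z : ℂ) (α : ℝ) :
    HasSum (fun s : ℤ => besselJ s z * cexp (I * s * α)) (cexp (I * z * Real.sin α)) := by
  have hper : Periodic (fun τ : ℝ => cexp (I * z * Real.sin τ)) (π - -π) := fun τ => by
    beta_reduce
    rw [sub_neg_eq_add, ← two_mul, Real.sin_add_two_pi]
  have hsmooth : ContDiff ℝ 2 (fun τ : ℝ => cexp (I * z * Real.sin τ)) :=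
    contDiff_exp.comp (contDiff_const.mul (ofRealCLM.contDiff.comp Real.contDiff_sin))
  convert hasSum_fourierCoeffOn_of_contDiff (neg_lt_self Real.pi_pos) hsmooth hper α using 1
  ext s
  rw [besselJ_eq_fourierCoeffOn, fourier_coe_apply]
  congr 2
  push_cast
  field_simp
  ring

theorem besselJ_zero_add_errE (θ φ : ℝ) (z : ℂ) :
    besselJ 0 z + errE θ φ z = cexp (I * z * Real.cos (θ - φ)) := by
  set f : ℤ → ℂ := fun s => I ^ s * besselJ s z * cexp (I * s * (θ - φ))
  have hf : HasSum f (cexp (I * z * Real.cos (θ - φ))) := by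
    convert hasSum_besselJ_mul_exp z (θ - φ + π / 2) using 1
    · ext s
      have : I * s * ((θ - φ + π / 2 : ℝ) : ℂ) = I * s * (θ - φ) + s * (π / 2 * I) := by
        push_cast
        ring
      rw [this, exp_add, exp_int_mul, exp_pi_div_two_mul_I]
      ring
    · rw [Real.sin_add_pi_div_two]
  rw [← hf.tsum_eq, ← hf.summable.sum_add_tsum_subtype_compl {0}, Finset.sum_singleton,
    tsum_congr_subtype f (Q := (· ≠ 0)) (fun s => Finset.mem_singleton.not)]
  simp [f, errE]

theorem Finset.sum_sum_ne_mul {ι R : Type*} [DecidableEq ι] [CommRing R] (s : Finset ι)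
    (f : ι → R) :
    ∑ p ∈ s, ∑ q ∈ s with q ≠ p, f p * f q = (∑ p ∈ s, f p) ^ 2 - ∑ p ∈ s, f p ^ 2 := by
  have hrow : ∀ p ∈ s, ∑ q ∈ s with q ≠ p, f p * f q = f p * ∑ q ∈ s, f q - f p ^ 2 :=
    fun p hp => by rw [← mul_sum, filter_ne', sum_erase_eq_sub hp, mul_sub, sq]
  rw [sum_congr rfl hrow, sum_sub_distrib, ← sum_mul, sq]

theorem inner_cos_sin (θ φ : ℝ) :
    ⟪(!₂[Real.cos θ, Real.sin θ] : EuclideanSpace ℝ (Fin 2)), !₂[Real.cos φ, Real.sin φ]⟫ =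
      Real.cos (θ - φ) := by
  simp only [PiLp.inner_apply, RCLike.inner_apply, Real.ringHom_apply, Fin.sum_univ_two,
    Matrix.cons_val_zero, Matrix.cons_val_one, Real.cos_sub]
  ring

theorem besselJ_zero_add_mean_errE {N : ℕ} (hN : (N : ℂ) ≠ 0) (θ : Fin N → ℝ) (φ : ℝ) (z : ℂ) :
    besselJ 0 z + 1 / N * ∑ n, errE (θ n) φ z =
      1 / N * ∑ n, cexp (I * z * Real.cos (θ n - φ)) := by
  simp_rw [← besselJ_zero_add_errE, Finset.sum_add_distrib, Finset.sum_const, Finset.card_univ,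
    Fintype.card_fin, nsmul_eq_mul]
  field_simp

theorem stmt4_general (N : ℕ) (hN : 1 ≤ N) (θ : Fin N → ℝ)
    (a : Fin N → EuclideanSpace ℝ (Fin 2))
    (ha : ∀ n, a n = (!₂[Real.cos (θ n), Real.sin (θ n)] : EuclideanSpace ℝ (Fin 2)))
    (k : ℂ) (r r' : EuclideanSpace ℝ (Fin 2)) (φ : ℝ)
    (hφ : r - r' = ‖r - r'‖ • (!₂[Real.cos φ, Real.sin φ] : EuclideanSpace ℝ (Fin 2))) :
    (1 / (N : ℂ)) * ∑ p : Fin N, ∑ q ∈ Finset.univ.filter (fun q => q ≠ p),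
        Complex.exp (Complex.I * k * ((⟪a p + a q, r - r'⟫ : ℝ) : ℂ)) =
      (N : ℂ) * (besselJ 0 (k * (‖r - r'‖ : ℂ)) +
          (1 / (N : ℂ)) * ∑ n : Fin N, errE (θ n) φ (k * (‖r - r'‖ : ℂ))) ^ 2 -
        (besselJ 0 (2 * k * (‖r - r'‖ : ℂ)) +
          (1 / (N : ℂ)) * ∑ n : Fin N, errE (θ n) φ (2 * k * (‖r - r'‖ : ℂ))) := by
  have hN' : (N : ℂ) ≠ 0 := Nat.cast_ne_zero.mpr (by omega)
  rw [besselJ_zero_add_mean_errE hN', besselJ_zero_add_mean_errE hN']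
  set ρ := ‖r - r'‖
  set c : Fin N → ℂ := fun n => cexp (I * (k * ρ) * Real.cos (θ n - φ))
  have hpair : ∀ p q, cexp (I * k * ⟪a p + a q, r - r'⟫) = c p * c q := fun p q => by
    rw [inner_add_left, ha, ha, hφ, inner_smul_right, inner_smul_right, inner_cos_sin,
      inner_cos_sin, ← exp_add]
    push_cast
    ring_nf
  have hsq : ∀ n, cexp (I * (2 * k * ρ) * Real.cos (θ n - φ)) = c n ^ 2 := fun n => by
    rw [← exp_nat_mul]
    ring_nf
  simp_rw [hpair, Finset.sum_sum_ne_mul, hsq]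
  field_simp

/-- Pointwise kernel identity underlying Theorem 3.1:
`(1/N) Σ_p Σ_{q ≠ p} e^{i k (a_p + a_q)·(r − r')}
  = N (J_0(kρ) + (1/N) Σ_n E(θ_n, φ, kρ))² − (J_0(2kρ) + (1/N) Σ_n E(θ_n, φ, 2kρ))`,
where `ρ = |r − r'|`. -/
theorem stmt4 (N : ℕ) (hN : 1 ≤ N) (θ : Fin N → ℝ)
    (a : Fin N → EuclideanSpace ℝ (Fin 2))
    (ha : ∀ n, a n = (!₂[Real.cos (θ n), Real.sin (θ n)] : EuclideanSpace ℝ (Fin 2)))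
    (k : ℂ) (r r' : EuclideanSpace ℝ (Fin 2)) (hrr : r ≠ r') (φ : ℝ)
    (hφ : r - r' = ‖r - r'‖ • (!₂[Real.cos φ, Real.sin φ] : EuclideanSpace ℝ (Fin 2))) :
    (1 / (N : ℂ)) * ∑ p : Fin N, ∑ q ∈ Finset.univ.filter (fun q => q ≠ p),
        Complex.exp (Complex.I * k * ((⟪a p + a q, r - r'⟫ : ℝ) : ℂ)) =
      (N : ℂ) * (besselJ 0 (k * (‖r - r'‖ : ℂ)) +
          (1 / (N : ℂ)) * ∑ n : Fin N, errE (θ n) φ (k * (‖r - r'‖ : ℂ))) ^ 2 -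
        (besselJ 0 (2 * k * (‖r - r'‖ : ℂ)) +
          (1 / (N : ℂ)) * ∑ n : Fin N, errE (θ n) φ (2 * k * (‖r - r'‖ : ℂ))) :=
  stmt4_general N hN θ a ha k r r' φ hφ
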